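/- S_n / n → (p − q)·sign(X_1) almost surely as n → ∞, where sign(1) = 1, sign(−1) = −1 and sign(0) = 0. -/

import Mathlib

/-!
Conditionally on `X 1 = c`, the hypotheses on the conditional expectations say that every later
step `X (n + 1)` is independent of `X 1, …, X n` and has one fixed law on `{1, -1, 0}`, of mean
`(p - q) * sign c`. So under `P[|X 1 = c]` the steps `X 2, X 3, …` are identically distributed
and pairwise independent, which is all Etemadi's strong law needs; transporting its conclusion
back to `P` on each of the three events `X 1 = c` gives the theorem.
-/

open MeasureTheory ProbabilityTheory Filter Real
open scoped ENNReal NNReal Topology Classical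

noncomputable section

/-- The σ-algebra `σ(X_1, …, X_n)` generated by the first `n` steps. -/
def sigmaUpTo {Ω : Type*} (X : ℕ → Ω → ℝ) (n : ℕ) : MeasurableSpace Ω :=
  MeasurableSpace.comap (fun ω (k : Fin n) => X ((k : ℕ) + 1) ω) inferInstance

/-- Weak convergence of a sequence of measures on `ℝ` (convergence in distribution):
integrals of every bounded continuous function converge. -/
def TendstoInDist (μs : ℕ → Measure ℝ) (ν : Measure ℝ) : Prop :=
  ∀ f : BoundedContinuousFunction ℝ ℝ,
    Tendsto (fun n => ∫ x, f x ∂(μs n)) atTop (𝓝 (∫ x, f x ∂ν))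

open Finset

section FiniteValued

variable {Ω β : Type*} [MeasurableSpace Ω] [MeasurableSpace β] [MeasurableSingletonClass β]
  {μ : Measure Ω} {F : Finset β}

lemma measure_inter_preimage_eq_sum {f : Ω → β} (hf : Measurable f) (hfF : ∀ ω, f ω ∈ F)
    (B : Set Ω) (s : Set β) :
    μ (B ∩ f ⁻¹' s) = ∑ b ∈ F with b ∈ s, μ (B ∩ f ⁻¹' {b}) := by
  have hs : f ⁻¹' s = f ⁻¹' ↑(F.filter (· ∈ s)) := by
    ext ω
    simp [hfF ω]
  rw [hs, Set.inter_comm, ← Measure.restrict_apply (hf (Finset.measurableSet _)),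
    ← sum_measure_preimage_singleton _ fun b _ => hf (measurableSet_singleton b)]
  refine sum_congr rfl fun b _ => ?_
  rw [Measure.restrict_apply (hf (measurableSet_singleton b)), Set.inter_comm]

lemma measureReal_inter_preimage_eq_sum [IsFiniteMeasure μ] {f : Ω → β} (hf : Measurable f)
    (hfF : ∀ ω, f ω ∈ F) (B : Set Ω) (s : Set β) :
    μ.real (B ∩ f ⁻¹' s) = ∑ b ∈ F with b ∈ s, μ.real (B ∩ f ⁻¹' {b}) := by
  simp only [measureReal_def, measure_inter_preimage_eq_sum hf hfF B s,
    ENNReal.toReal_sum fun b _ => measure_ne_top μ _]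

lemma measureReal_preimage_eq_sum [IsFiniteMeasure μ] {f : Ω → β} (hf : Measurable f)
    (hfF : ∀ ω, f ω ∈ F) (s : Set β) :
    μ.real (f ⁻¹' s) = ∑ b ∈ F with b ∈ s, μ.real (f ⁻¹' {b}) := by
  simpa using measureReal_inter_preimage_eq_sum (μ := μ) hf hfF Set.univ s

lemma indepFun_of_measureReal_inter_preimage_singleton [IsFiniteMeasure μ] {G : Finset β}
    {f g : Ω → β} (hf : Measurable f) (hg : Measurable g) (hfF : ∀ ω, f ω ∈ F)
    (hgG : ∀ ω, g ω ∈ G)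
    (h : ∀ a ∈ F, ∀ b ∈ G,
      μ.real (f ⁻¹' {a} ∩ g ⁻¹' {b}) = μ.real (f ⁻¹' {a}) * μ.real (g ⁻¹' {b})) :
    IndepFun f g μ := by
  rw [indepFun_iff_measure_inter_preimage_eq_mul]
  intro s t _ _
  rw [← ENNReal.toReal_eq_toReal_iff' (measure_ne_top μ _) (by finiteness), ENNReal.toReal_mul]
  simp only [← measureReal_def]
  calc μ.real (f ⁻¹' s ∩ g ⁻¹' t)
      = ∑ a ∈ F with a ∈ s, ∑ b ∈ G with b ∈ t, μ.real (f ⁻¹' {a} ∩ g ⁻¹' {b}) := by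
        rw [Set.inter_comm, measureReal_inter_preimage_eq_sum hf hfF]
        refine sum_congr rfl fun a _ => ?_
        rw [Set.inter_comm, measureReal_inter_preimage_eq_sum hg hgG]
    _ = μ.real (f ⁻¹' s) * μ.real (g ⁻¹' t) := by
        rw [measureReal_preimage_eq_sum hf hfF, measureReal_preimage_eq_sum hg hgG, sum_mul_sum]
        exact sum_congr rfl fun a ha => sum_congr rfl fun b hb =>
          h a (mem_filter.1 ha).1 b (mem_filter.1 hb).1

lemma identDistrib_of_measureReal_preimage_singleton {ν : Measure Ω} [IsFiniteMeasure μ]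
    [IsFiniteMeasure ν] {f g : Ω → β} (hf : Measurable f) (hg : Measurable g)
    (hfF : ∀ ω, f ω ∈ F) (hgF : ∀ ω, g ω ∈ F)
    (h : ∀ a ∈ F, μ.real (f ⁻¹' {a}) = ν.real (g ⁻¹' {a})) :
    IdentDistrib f g μ ν where
  aemeasurable_fst := hf.aemeasurable
  aemeasurable_snd := hg.aemeasurable
  map_eq := by
    ext s hs
    rw [Measure.map_apply hf hs, Measure.map_apply hg hs,
      ← ENNReal.toReal_eq_toReal_iff' (measure_ne_top μ _) (measure_ne_top ν _)]
    simp only [← measureReal_def]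
    rw [measureReal_preimage_eq_sum hf hfF, measureReal_preimage_eq_sum hg hgF]
    exact sum_congr rfl fun a ha => h a (mem_filter.1 ha).1

end FiniteValued

section RealFiniteValued

variable {Ω : Type*} [MeasurableSpace Ω] {μ : Measure Ω} {F : Finset ℝ} {f : Ω → ℝ}

lemma integrable_of_forall_mem_finset [IsFiniteMeasure μ] (hf : Measurable f)
    (hfF : ∀ ω, f ω ∈ F) : Integrable f μ :=
  .of_bound hf.aestronglyMeasurable (∑ a ∈ F, ‖a‖) <| ae_of_all _ fun ω =>
    single_le_sum (f := fun a => ‖a‖) (fun _ _ => norm_nonneg _) (hfF ω)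

lemma integral_eq_sum_of_forall_mem_finset [IsFiniteMeasure μ] (hf : Measurable f)
    (hfF : ∀ ω, f ω ∈ F) : ∫ ω, f ω ∂μ = ∑ a ∈ F, μ.real (f ⁻¹' {a}) * a := by
  have hsum : f = fun ω => ∑ a ∈ F, (f ⁻¹' {a}).indicator (fun _ => a) ω := by
    ext ω
    simp [Set.indicator_apply, hfF ω]
  conv_lhs => rw [hsum]
  rw [integral_finsetSum _ fun a _ =>
    (integrable_const a).indicator (hf (measurableSet_singleton a))]
  exact sum_congr rfl fun a _ => by
    rw [integral_indicator_const a (hf (measurableSet_singleton a)), smul_eq_mul]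

theorem strong_law_ae_of_forall_mem_finset [IsProbabilityMeasure μ]
    {Y : ℕ → Ω → ℝ} (hY : ∀ i, Measurable (Y i)) (hYF : ∀ i ω, Y i ω ∈ F) (θ : ℝ → ℝ)
    (hlaw : ∀ i, ∀ b ∈ F, μ.real (Y i ⁻¹' {b}) = θ b)
    (hpair : ∀ i j, i < j → ∀ a ∈ F, ∀ b ∈ F,
      μ.real (Y i ⁻¹' {a} ∩ Y j ⁻¹' {b}) = μ.real (Y i ⁻¹' {a}) * θ b) :
    ∀ᵐ ω ∂μ, Tendsto (fun n : ℕ => (∑ i ∈ range n, Y i ω) / n) atTop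
      (𝓝 (∑ b ∈ F, θ b * b)) := by
  have hindep : ∀ i j, i < j → IndepFun (Y i) (Y j) μ := fun i j hij =>
    indepFun_of_measureReal_inter_preimage_singleton (hY i) (hY j) (hYF i) (hYF j)
      fun a ha b hb => by rw [hpair i j hij a ha b hb, hlaw j b hb]
  have hmean : μ[Y 0] = ∑ b ∈ F, θ b * b := by
    rw [integral_eq_sum_of_forall_mem_finset (hY 0) (hYF 0)]
    exact sum_congr rfl fun b hb => by rw [hlaw 0 b hb]
  rw [← hmean]
  refine strong_law_ae_real Y (integrable_of_forall_mem_finset (hY 0) (hYF 0)) ?_ fun i =>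
    identDistrib_of_measureReal_preimage_singleton (hY i) (hY 0) (hYF i) (hYF 0)
      fun b hb => by rw [hlaw i b hb, hlaw 0 b hb]
  intro i j hij
  rcases hij.lt_or_gt with h | h
  exacts [hindep i j h, (hindep j i h).symm]

end RealFiniteValued

section Conditioning

variable {Ω : Type*} {m m₀ : MeasurableSpace Ω} {μ : Measure[m₀] Ω} {s : Set Ω}

lemma measureReal_cond_apply (hs : MeasurableSet[m₀] s) (t : Set Ω) :
    μ[|s].real t = (μ.real s)⁻¹ * μ.real (s ∩ t) := by
  rw [measureReal_def, cond_apply hs, ENNReal.toReal_mul, ENNReal.toReal_inv, measureReal_def,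
    measureReal_def]

lemma ae_imp_of_ae_cond [IsFiniteMeasure μ] {φ : Ω → Prop} (h : ∀ᵐ ω ∂μ[|s], φ ω) :
    ∀ᵐ ω ∂μ, ω ∈ s → φ ω := by
  rcases eq_or_ne (μ s) 0 with hs | hs
  · filter_upwards [measure_eq_zero_iff_ae_notMem.1 hs] with ω hω hωs
    exact absurd hωs hω
  · exact ae_imp_of_ae_restrict <|
      (Measure.ae_ennreal_smul_measure_iff (ENNReal.inv_ne_zero.2 (measure_ne_top μ s))).1 h

lemma measureReal_inter_eq_mul_of_condExp_indicator [IsFiniteMeasure μ] (hm : m ≤ m₀)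
    {A B : Set Ω} (hB : MeasurableSet[m₀] B) {f : Ω → ℝ}
    (hf : μ[B.indicator (fun _ => (1 : ℝ)) | m] =ᵐ[μ] f) (hA : MeasurableSet[m] A) {t : ℝ}
    (hfA : ∀ ω ∈ A, f ω = t) : μ.real (A ∩ B) = t * μ.real A := by
  calc μ.real (A ∩ B) = ∫ ω in A, B.indicator (fun _ => (1 : ℝ)) ω ∂μ := by
        rw [setIntegral_indicator hB, setIntegral_const, smul_eq_mul, mul_one, Set.inter_comm]
    _ = ∫ ω in A, (μ[B.indicator (fun _ => (1 : ℝ)) | m]) ω ∂μ :=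
        (setIntegral_condExp hm ((integrable_const 1).indicator hB) hA).symm
    _ = ∫ ω in A, f ω ∂μ := integral_congr_ae (ae_restrict_of_ae hf)
    _ = t * μ.real A := by
        rw [setIntegral_congr_fun (hm A hA) hfA, setIntegral_const, smul_eq_mul, mul_comm]

end Conditioning

lemma tendsto_sum_range_div_of_tendsto_sum_range_succ_div {x : ℕ → ℝ} {L : ℝ}
    (h : Tendsto (fun n : ℕ => (∑ i ∈ range n, x (i + 1)) / n) atTop (𝓝 L)) :
    Tendsto (fun n : ℕ => (∑ i ∈ range n, x i) / n) atTop (𝓝 L) := by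
  rw [← tendsto_add_atTop_iff_nat 1]
  have hx₀ : Tendsto (fun n : ℕ => x 0 / ((n : ℝ) + 1)) atTop (𝓝 0) := by
    simpa [Function.comp_def] using
      (tendsto_const_div_atTop_nhds_zero_nat (x 0)).comp (tendsto_add_atTop_nat 1)
  have := hx₀.add (h.mul (tendsto_natCast_div_add_atTop (1 : ℝ)))
  rw [zero_add, mul_one] at this
  refine this.congr fun n => ?_
  rw [sum_range_succ', Nat.cast_succ]
  rcases eq_or_ne n 0 with rfl | hn
  · simp
  · field_simp
    ring

section FirstStepMemory

lemma measurable_sigmaUpTo {Ω : Type*} {X : ℕ → Ω → ℝ} {i n : ℕ} (hi : 1 ≤ i) (hin : i ≤ n) :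
    Measurable[sigmaUpTo X n] (X i) := by
  have hX : X i = (fun v : Fin n → ℝ => v ⟨i - 1, by omega⟩) ∘
      fun ω (k : Fin n) => X ((k : ℕ) + 1) ω := by
    ext ω
    simp [Nat.sub_add_cancel hi]
  rw [hX]
  exact (measurable_pi_apply _).comp (comap_measurable _)

variable {Ω : Type*} [MeasurableSpace Ω] {P : Measure Ω} {X : ℕ → Ω → ℝ} {p q c : ℝ}

lemma sigmaUpTo_le (hX : ∀ n, Measurable (X n)) (n : ℕ) :
    sigmaUpTo X n ≤ ‹MeasurableSpace Ω› :=
  Measurable.comap_le (measurable_pi_lambda _ fun _ => hX _)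

/-- `upProb p q c` is the conditional probability of a `+1` step given `X 1 = c`; swapping `p`
and `q` gives that of a `-1` step. -/
def upProb (p q c : ℝ) : ℝ :=
  p * (if c = 1 then 1 else 0) + q * (if c = -1 then 1 else 0)

def stepLaw (p q c b : ℝ) : ℝ :=
  if b = 1 then upProb p q c else if b = -1 then upProb q p c else 1 - upProb p q c - upProb q p c

lemma sum_stepLaw_mul : ∑ b ∈ ({1, -1, 0} : Finset ℝ), stepLaw p q c b * b
    = upProb p q c - upProb q p c := by
  norm_num [stepLaw]
  ring

lemma upProb_sub_upProb (hc : c ∈ ({1, -1, 0} : Finset ℝ)) :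
    upProb p q c - upProb q p c = (p - q) * Real.sign c := by
  simp only [mem_insert, mem_singleton] at hc
  rcases hc with rfl | rfl | rfl <;> norm_num [upProb, Real.sign_of_neg]

lemma measureReal_cond_inter_eq_upProb_mul [IsFiniteMeasure P] (hX : ∀ n, Measurable (X n))
    {n : ℕ} (hn : 1 ≤ n) {α β b : ℝ}
    (hcond : P[(X (n + 1) ⁻¹' {b}).indicator (fun _ => (1 : ℝ)) | sigmaUpTo X n]
      =ᵐ[P] fun ω => upProb α β (X 1 ω))
    {A : Set Ω} (hA : MeasurableSet[sigmaUpTo X n] A) :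
    P[|X 1 ⁻¹' {c}].real (A ∩ X (n + 1) ⁻¹' {b}) = upProb α β c * P[|X 1 ⁻¹' {c}].real A := by
  have hT : MeasurableSet[sigmaUpTo X n] (X 1 ⁻¹' {c}) :=
    measurable_sigmaUpTo le_rfl hn (measurableSet_singleton c)
  rw [measureReal_cond_apply (hX 1 (measurableSet_singleton c)),
    measureReal_cond_apply (hX 1 (measurableSet_singleton c)), ← Set.inter_assoc,
    measureReal_inter_eq_mul_of_condExp_indicator (sigmaUpTo_le hX n)
      (hX _ (measurableSet_singleton b)) hcond (hT.inter hA)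
      fun ω hω => by rw [show X 1 ω = c from hω.1]]
  ring

variable (hX : ∀ n, Measurable (X n))
  (hXval : ∀ n, 1 ≤ n → ∀ ω, X n ω = 1 ∨ X n ω = -1 ∨ X n ω = 0)
  (hcondp : ∀ n : ℕ, 1 ≤ n →
    P[(X (n + 1) ⁻¹' {1}).indicator (fun _ => (1 : ℝ)) | sigmaUpTo X n]
      =ᵐ[P] fun ω => upProb p q (X 1 ω))
  (hcondq : ∀ n : ℕ, 1 ≤ n →
    P[(X (n + 1) ⁻¹' {-1}).indicator (fun _ => (1 : ℝ)) | sigmaUpTo X n]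
      =ᵐ[P] fun ω => upProb q p (X 1 ω))
include hX hXval hcondp hcondq

lemma measureReal_cond_inter_eq_stepLaw_mul [IsFiniteMeasure P] {n : ℕ} (hn : 1 ≤ n)
    {A : Set Ω} (hA : MeasurableSet[sigmaUpTo X n] A) {b : ℝ}
    (hb : b ∈ ({1, -1, 0} : Finset ℝ)) :
    P[|X 1 ⁻¹' {c}].real (A ∩ X (n + 1) ⁻¹' {b}) = stepLaw p q c b * P[|X 1 ⁻¹' {c}].real A := by
  have hup := measureReal_cond_inter_eq_upProb_mul (c := c) hX hn (hcondp n hn) hA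
  have hdown := measureReal_cond_inter_eq_upProb_mul (c := c) hX hn (hcondq n hn) hA
  simp only [mem_insert, mem_singleton] at hb
  rcases hb with rfl | rfl | rfl
  · simpa [stepLaw] using hup
  · norm_num [stepLaw, hdown]
  · have hpart := measureReal_inter_preimage_eq_sum (μ := P[|X 1 ⁻¹' {c}]) (hX (n + 1))
      (F := {1, -1, 0}) (fun ω => by simpa using hXval (n + 1) (by omega) ω) A Set.univ
    norm_num at hpart
    norm_num [stepLaw]
    linarith

theorem ae_tendsto_of_first_step_eq [IsFiniteMeasure P] (c : ℝ) :
    ∀ᵐ ω ∂P, X 1 ω = c → Tendsto (fun n : ℕ => (∑ k ∈ Icc 1 n, X k ω) / n) atTop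
      (𝓝 (upProb p q c - upProb q p c)) := by
  refine ae_imp_of_ae_cond (s := X 1 ⁻¹' {c}) ?_
  rcases eq_or_ne (P (X 1 ⁻¹' {c})) 0 with h0 | h0
  · simp [cond_eq_zero_of_meas_eq_zero h0]
  have := cond_isProbabilityMeasure h0
  have hslln := strong_law_ae_of_forall_mem_finset (μ := P[|X 1 ⁻¹' {c}])
    (Y := fun i => X (i + 2)) (F := {1, -1, 0}) (fun i => hX _)
    (fun i ω => by simpa using hXval (i + 2) (by omega) ω) (stepLaw p q c)
    (fun i b hb => by
      simpa using measureReal_cond_inter_eq_stepLaw_mul hX hXval hcondp hcondq (c := c)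
        (n := i + 1) (by omega) MeasurableSet.univ hb)
    (fun i j hij a _ b hb => by
      rw [measureReal_cond_inter_eq_stepLaw_mul hX hXval hcondp hcondq (c := c) (n := j + 1)
        (by omega) (measurable_sigmaUpTo (by omega) (by omega) (measurableSet_singleton a)) hb,
        mul_comm])
  filter_upwards [hslln] with ω hω
  rw [sum_stepLaw_mul] at hω
  have hsum (n : ℕ) : ∑ k ∈ Icc 1 n, X k ω = ∑ i ∈ range n, X (i + 1) ω := by
    rw [range_eq_Ico, sum_Ico_add' (X · ω) 0 n 1]
    rfl
  simp only [hsum]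
  exact tendsto_sum_range_div_of_tendsto_sum_range_succ_div hω

end FirstStepMemory

theorem erwd_first_step_memory_slln_general
    {Ω : Type*} [MeasurableSpace Ω] (P : Measure Ω) [IsProbabilityMeasure P]
    (p q : ℝ)
    (X : ℕ → Ω → ℝ) (hXmeas : ∀ n, Measurable (X n))
    (hXval : ∀ n, 1 ≤ n → ∀ ω, X n ω = 1 ∨ X n ω = -1 ∨ X n ω = 0)
    (hcondp : ∀ n : ℕ, 1 ≤ n →
      P[Set.indicator {ω | X (n + 1) ω = 1} (fun _ => (1 : ℝ)) | sigmaUpTo X n]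
        =ᵐ[P] fun ω =>
          p * (if X 1 ω = 1 then (1 : ℝ) else 0) + q * (if X 1 ω = -1 then (1 : ℝ) else 0))
    (hcondq : ∀ n : ℕ, 1 ≤ n →
      P[Set.indicator {ω | X (n + 1) ω = -1} (fun _ => (1 : ℝ)) | sigmaUpTo X n]
        =ᵐ[P] fun ω =>
          q * (if X 1 ω = 1 then (1 : ℝ) else 0) + p * (if X 1 ω = -1 then (1 : ℝ) else 0))
    (S : ℕ → Ω → ℝ) (hS : ∀ n ω, S n ω = ∑ k ∈ Finset.Icc 1 n, X k ω)
    :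
    ∀ᵐ ω ∂P,
      Tendsto (fun n : ℕ => S n ω / n) atTop (𝓝 ((p - q) * Real.sign (X 1 ω))) := by
  have hlim : ∀ c ∈ ({1, -1, 0} : Finset ℝ), ∀ᵐ ω ∂P, X 1 ω = c →
      Tendsto (fun n : ℕ => S n ω / n) atTop (𝓝 ((p - q) * Real.sign c)) := by
    intro c hc
    simp only [hS, ← upProb_sub_upProb hc]
    exact ae_tendsto_of_first_step_eq hXmeas hXval hcondp hcondq c
  filter_upwards [(eventually_all_finset _).2 hlim] with ω hω
  exact hω (X 1 ω) (by simpa using hXval 1 le_rfl ω) rfl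

/-- for the ERWD remembering only the first step,
`Sₙ/n → (p − q)·sign(X₁)` almost surely. -/
theorem erwd_first_step_memory_slln
    {Ω : Type*} [MeasurableSpace Ω] (P : Measure Ω) [IsProbabilityMeasure P]
    (p q r : ℝ) (hp : 0 < p) (hp1 : p < 1) (hq : 0 < q) (hq1 : q < 1)
    (hr : 0 < r) (hr1 : r < 1) (hpqr : p + q + r = 1)
    (X : ℕ → Ω → ℝ) (hXmeas : ∀ n, Measurable (X n))
    (hXval : ∀ n, 1 ≤ n → ∀ ω, X n ω = 1 ∨ X n ω = -1 ∨ X n ω = 0)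
    (hX1p : P {ω | X 1 ω = 1} = ENNReal.ofReal p)
    (hX1q : P {ω | X 1 ω = -1} = ENNReal.ofReal q)
    (hX1r : P {ω | X 1 ω = 0} = ENNReal.ofReal r)
    (hcondp : ∀ n : ℕ, 1 ≤ n →
      P[Set.indicator {ω | X (n + 1) ω = 1} (fun _ => (1 : ℝ)) | sigmaUpTo X n]
        =ᵐ[P] fun ω =>
          p * (if X 1 ω = 1 then (1 : ℝ) else 0) + q * (if X 1 ω = -1 then (1 : ℝ) else 0))
    (hcondq : ∀ n : ℕ, 1 ≤ n →
      P[Set.indicator {ω | X (n + 1) ω = -1} (fun _ => (1 : ℝ)) | sigmaUpTo X n]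
        =ᵐ[P] fun ω =>
          q * (if X 1 ω = 1 then (1 : ℝ) else 0) + p * (if X 1 ω = -1 then (1 : ℝ) else 0))
    (S : ℕ → Ω → ℝ) (hS : ∀ n ω, S n ω = ∑ k ∈ Finset.Icc 1 n, X k ω)
    :
    ∀ᵐ ω ∂P,
      Tendsto (fun n : ℕ => S n ω / n) atTop (𝓝 ((p - q) * Real.sign (X 1 ω))) :=
  erwd_first_step_memory_slln_general P p q X hXmeas hXval hcondp hcondq S hS
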